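/- arXiv:2206.11900 — 3 statements merged into one kernel-verified Lean document; each statement's English description precedes it below -/
import Mathlib

section
/- A subset \tilde{x} of the unit clauses Σ_x encoding an instance x with f(x)=0 is a sufficient reason for the prediction (i.e., every complete extension of \tilde{x} is predicted 0 by f, and \tilde{x} is minimal with this property) if and only if \tilde{x} together with Σ_f forms a minimal unsatisfiable subset among the soft clauses Σ_x, i.e., Σ_f ∪ \tilde{x} is unsatisfiable and Σ_f ∪ \tilde{x}' is satisfiable for every proper subset \tilde{x}' ⊂ \tilde{x}. -/
abbrev Clause (n : ℕ) := (Fin n → Bool) → Prop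

def Models {n : ℕ} (Sig : Set (Clause n)) (a : Fin n → Bool) : Prop := ∀ c ∈ Sig, c a

/-- `a` agrees with `x` on the feature set `T` (i.e. `a` is a completion of the
partial assignment obtained by restricting `x` to `T`). -/
def Agrees {n : ℕ} (x : Fin n → Bool) (T : Set (Fin n)) (a : Fin n → Bool) : Prop :=
  ∀ i ∈ T, a i = x i

/-- The partial assignment of `x` with domain `T` is a sufficient reason for `f x = 0`:
every completion is predicted 0, and `T` is minimal with this property. -/
def IsSufficientReason {n : ℕ} (f : (Fin n → Bool) → Bool) (x : Fin n → Bool)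
    (T : Set (Fin n)) : Prop :=
  (∀ a, Agrees x T a → f a = false) ∧
  ∀ T' ⊂ T, ¬ (∀ a, Agrees x T' a → f a = false)

/-- The subset of unit clauses of `Sigx` with domain `T` is a MUS relative to hard clauses `Sigf`:
`Sigf` together with the unit clauses on `T` is unsatisfiable, and this fails for every proper
subset of `T`. -/
def IsMUSForInstance {n : ℕ} (Sigf : Set (Clause n)) (x : Fin n → Bool)
    (T : Set (Fin n)) : Prop :=
  (¬ ∃ a, Models Sigf a ∧ Agrees x T a) ∧
  ∀ T' ⊂ T, ∃ a, Models Sigf a ∧ Agrees x T' a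

theorem eq_false_iff_not_models {n : ℕ} {f : (Fin n → Bool) → Bool} {Sigf : Set (Clause n)}
    (henc : ∀ a, f a = true ↔ Models Sigf a) (a : Fin n → Bool) :
    f a = false ↔ ¬ Models Sigf a := by
  rw [← henc, Bool.not_eq_true]

theorem forall_agrees_eq_false_iff_not_exists_models {n : ℕ} {f : (Fin n → Bool) → Bool}
    {Sigf : Set (Clause n)} (henc : ∀ a, f a = true ↔ Models Sigf a)
    (x : Fin n → Bool) (T : Set (Fin n)) :
    (∀ a, Agrees x T a → f a = false) ↔ ¬ ∃ a, Models Sigf a ∧ Agrees x T a := by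
  simp only [eq_false_iff_not_models henc, not_exists, not_and, imp_not_comm]

theorem sufficient_reason_iff_MUS_general {n : ℕ}
    (f : (Fin n → Bool) → Bool) (Sigf : Set (Clause n))
    (henc : ∀ a : Fin n → Bool, f a = true ↔ Models Sigf a)
    (x : Fin n → Bool) (T : Set (Fin n)) :
    IsSufficientReason f x T ↔ IsMUSForInstance Sigf x T := by
  simp only [IsSufficientReason, IsMUSForInstance,
    forall_agrees_eq_false_iff_not_exists_models henc, not_not]

/-- Proposition 1: sufficient reasons of a negatively predicted instance
are exactly the MUSes of `Sigf ∪ Sigx` among the soft clauses `Sigx`. -/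
theorem sufficient_reason_iff_MUS {n : ℕ}
    (f : (Fin n → Bool) → Bool) (Sigf : Set (Clause n))
    (henc : ∀ a : Fin n → Bool, f a = true ↔ Models Sigf a)
    (x : Fin n → Bool) (hx : f x = false) (T : Set (Fin n)) :
    IsSufficientReason f x T ↔ IsMUSForInstance Sigf x T :=
  sufficient_reason_iff_MUS_general f Sigf henc x T
end

section
/- Every minimal unsatisfiable subset (MUS) of an unsatisfiable finite CNF Σ intersects every minimal correction subset (MCS) of Σ; that is, MUSes are hitting sets of the collection of MCSes. -/
variable {α : Type*} [Nonempty α]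

def Satisfiable (Φ : Set (α → Prop)) : Prop := ∃ a : α, ∀ c ∈ Φ, c a

/-- `Γ` is a minimal unsatisfiable subset of `Sig`. -/
def IsMUS (Sig Γ : Set (α → Prop)) : Prop :=
  Γ ⊆ Sig ∧ ¬ Satisfiable Γ ∧ ∀ Γ' ⊂ Γ, Satisfiable Γ'

/-- `Ψ` is a minimal correction subset of `Sig`. -/
def IsMCS (Sig Ψ : Set (α → Prop)) : Prop :=
  Ψ ⊆ Sig ∧ Satisfiable (Sig \ Ψ) ∧ ∀ Ψ' ⊂ Ψ, ¬ Satisfiable (Sig \ Ψ')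

theorem Satisfiable.mono {β : Type*} {Φ Φ' : Set (β → Prop)} (h : Φ ⊆ Φ') (hΦ' : Satisfiable Φ') :
    Satisfiable Φ :=
  let ⟨a, ha⟩ := hΦ'
  ⟨a, fun c hc => ha c (h hc)⟩

theorem mus_hits_mcs_general (Sig : Set (α → Prop))
    (Γ Ψ : Set (α → Prop)) (hΓ : IsMUS Sig Γ) (hΨ : IsMCS Sig Ψ) :
    (Γ ∩ Ψ).Nonempty := by
  obtain ⟨hΓSig, hΓunsat, -⟩ := hΓ
  obtain ⟨-, hSigΨ, -⟩ := hΨ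
  rw [← Set.not_disjoint_iff_nonempty_inter]
  exact fun hdisj => hΓunsat (hSigΨ.mono (Set.subset_sdiff.2 ⟨hΓSig, hdisj⟩))

/-- every MUS of a finite unsatisfiable CNF intersects every MCS. -/
theorem mus_hits_mcs (Sig : Set (α → Prop)) (hfin : Sig.Finite)
    (hunsat : ¬ Satisfiable Sig)
    (Γ Ψ : Set (α → Prop)) (hΓ : IsMUS Sig Γ) (hΨ : IsMCS Sig Ψ) :
    (Γ ∩ Ψ).Nonempty :=
  mus_hits_mcs_general Sig Γ Ψ hΓ hΨ
end

section
/- For a finite unsatisfiable CNF Σ, a subset Γ ⊆ Σ is a MUS if and only if Γ is a minimal hitting set of the set of all MCSes of Σ, and dually a subset Ψ ⊆ Σ is an MCS if and only if Ψ is a minimal hitting set of the set of all MUSes of Σ. -/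
variable {α : Type*} [Nonempty α]

/-- `H` is a hitting set of the family `F`. -/
def IsHittingSet {β : Type*} (H : Set β) (F : Set (Set β)) : Prop :=
  ∀ A ∈ F, (H ∩ A).Nonempty

/-- `H` is a minimal hitting set of the family `F`. -/
def IsMinimalHittingSet {β : Type*} (H : Set β) (F : Set (Set β)) : Prop :=
  IsHittingSet H F ∧ ∀ H' ⊂ H, ¬ IsHittingSet H' F

lemma sat_mono {Φ Φ' : Set (α → Prop)} (h : Φ' ⊆ Φ) : Satisfiable Φ → Satisfiable Φ' :=
  fun ⟨a, ha⟩ => ⟨a, fun c hc => ha c (h hc)⟩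

lemma exists_mus {Sig Γ : Set (α → Prop)} (hfin : Sig.Finite)
    (hΓ : Γ ⊆ Sig) (h : ¬ Satisfiable Γ) : ∃ M ⊆ Γ, IsMUS Sig M := by
  have hS : {Γ' | Γ' ⊆ Γ ∧ ¬ Satisfiable Γ'}.Finite :=
    ((hfin.subset hΓ).finite_subsets).subset (fun x hx => hx.1)
  obtain ⟨M, hM, hmin⟩ := Set.Finite.exists_minimalFor id _ hS ⟨Γ, Set.Subset.rfl, h⟩
  refine ⟨M, hM.1, hM.1.trans hΓ, hM.2, fun Γ' hΓ' => ?_⟩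
  by_contra hns
  exact hΓ'.ne (hΓ'.subset.antisymm (hmin ⟨hΓ'.subset.trans hM.1, hns⟩ hΓ'.subset))

lemma exists_mcs {Sig Ψ : Set (α → Prop)} (hfin : Sig.Finite)
    (hΨ : Ψ ⊆ Sig) (h : Satisfiable (Sig \ Ψ)) : ∃ M ⊆ Ψ, IsMCS Sig M := by
  have hS : {Ψ' | Ψ' ⊆ Ψ ∧ Satisfiable (Sig \ Ψ')}.Finite :=
    ((hfin.subset hΨ).finite_subsets).subset (fun x hx => hx.1)
  obtain ⟨M, hM, hmin⟩ := Set.Finite.exists_minimalFor id _ hS ⟨Ψ, Set.Subset.rfl, h⟩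
  refine ⟨M, hM.1, hM.1.trans hΨ, hM.2, fun Ψ' hΨ' hs => ?_⟩
  exact hΨ'.ne (hΨ'.subset.antisymm (hmin ⟨hΨ'.subset.trans hM.1, hs⟩ hΨ'.subset))

lemma lemA {Sig Γ : Set (α → Prop)} (hfin : Sig.Finite) (hΓ : Γ ⊆ Sig) :
    ¬ Satisfiable Γ ↔ IsHittingSet Γ {Ψ | IsMCS Sig Ψ} := by
  constructor
  · intro h Ψ hΨ
    by_contra hne
    rw [Set.not_nonempty_iff_eq_empty] at hne
    have hsub : Γ ⊆ Sig \ Ψ := fun x hx =>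
      ⟨hΓ hx, fun hxΨ => (Set.eq_empty_iff_forall_notMem.mp hne x) ⟨hx, hxΨ⟩⟩
    exact h (sat_mono hsub hΨ.2.1)
  · intro hhit hs
    have hsat : Satisfiable (Sig \ (Sig \ Γ)) := by
      rwa [Set.diff_diff_cancel_left hΓ]
    obtain ⟨M, hMsub, hM⟩ := exists_mcs hfin Set.diff_subset hsat
    obtain ⟨x, hxΓ, hxM⟩ := hhit M hM
    exact (hMsub hxM).2 hxΓ

lemma lemB {Sig Ψ : Set (α → Prop)} (hfin : Sig.Finite) (hΨ : Ψ ⊆ Sig) :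
    Satisfiable (Sig \ Ψ) ↔ IsHittingSet Ψ {Γ | IsMUS Sig Γ} := by
  constructor
  · intro h Γ hΓ
    by_contra hne
    rw [Set.not_nonempty_iff_eq_empty] at hne
    have hsub : Γ ⊆ Sig \ Ψ := fun x hx =>
      ⟨hΓ.1 hx, fun hxΨ => (Set.eq_empty_iff_forall_notMem.mp hne x) ⟨hxΨ, hx⟩⟩
    exact hΓ.2.1 (sat_mono hsub h)
  · intro hhit
    by_contra hns
    obtain ⟨M, hMsub, hM⟩ := exists_mus hfin Set.diff_subset hns
    obtain ⟨x, hxΨ, hxM⟩ := hhit M hM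
    exact (hMsub hxM).2 hxΨ

/-- hitting-set duality: for a finite unsatisfiable CNF `Sig`, the MUSes are
exactly the minimal hitting sets (within `Sig`) of the MCSes, and dually the MCSes are
exactly the minimal hitting sets (within `Sig`) of the MUSes. -/
theorem mus_mcs_hitting_set_duality (Sig : Set (α → Prop)) (hfin : Sig.Finite)
    (hunsat : ¬ Satisfiable Sig) :
    (∀ Γ ⊆ Sig, (IsMUS Sig Γ ↔ IsMinimalHittingSet Γ {Ψ | IsMCS Sig Ψ})) ∧
    (∀ Ψ ⊆ Sig, (IsMCS Sig Ψ ↔ IsMinimalHittingSet Ψ {Γ | IsMUS Sig Γ})) := by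
  constructor
  · intro Γ hΓ
    constructor
    · rintro ⟨-, huns, hmin⟩
      refine ⟨(lemA hfin hΓ).mp huns, fun H' hH' hhit => ?_⟩
      exact (lemA hfin (hH'.subset.trans hΓ)).mpr hhit (hmin H' hH')
    · rintro ⟨hhit, hmin⟩
      refine ⟨hΓ, (lemA hfin hΓ).mpr hhit, fun Γ' hΓ' => ?_⟩
      by_contra hns
      exact hmin Γ' hΓ' ((lemA hfin (hΓ'.subset.trans hΓ)).mp hns)
  · intro Ψ hΨ
    constructor
    · rintro ⟨-, hsat, hmin⟩
      refine ⟨(lemB hfin hΨ).mp hsat, fun H' hH' hhit => ?_⟩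
      exact hmin H' hH' ((lemB hfin (hH'.subset.trans hΨ)).mpr hhit)
    · rintro ⟨hhit, hmin⟩
      refine ⟨hΨ, (lemB hfin hΨ).mpr hhit, fun Ψ' hΨ' hs => ?_⟩
      exact hmin Ψ' hΨ' ((lemB hfin (hΨ'.subset.trans hΨ)).mp hs)
end
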